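/- arXiv:nucl-th/9502040 — 4 statements merged into one kernel-verified Lean document; each statement's English description precedes it below -/
import Mathlib

section
/- Let R be a (possibly noncommutative) ring, let g be a unit of R with inverse h, and for each channel index α ∈ Fin 3 let K_α, T_α ∈ R satisfy the Bethe–Salpeter relation T_α = K_α + K_α·g·T_α. Write δ̄_{αβ} = 1 − δ_{αβ} (equal to 1 if α ≠ β and 0 if α = β). Suppose U : Fin 3 → Fin 3 → R satisfies the covariant AGS equations U_{αβ} = δ̄_{αβ}·h + Σ_γ δ̄_{αγ}·T_γ·g·U_{γβ}. Then the element M := Σ_{α,β} T_α·g·U_{αβ}·g·T_β satisfies M = Σ_{α,β} δ̄_{αβ}·K_α·g·T_β + Σ_α K_α·g·M. (This is the paper's claim that its Eq. (M2) formally solves the integral equation for the connected two-particle-irreducible NNπ → NNπ amplitude M^{(2)}.) -/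
/-!
Contract the AGS equations on the right with `g T_β` and sum over `β`: the row sums
`Y_α = Σ_β U_{αβ} g T_β` satisfy `Y_α = Σ_β δ̄_{αβ} T_β + Σ_γ δ̄_{αγ} T_γ g Y_γ`, since `h g = 1`,
and `M = Σ_α T_α g Y_α`. The Bethe–Salpeter relation gives `T_α g Y_α = K_α g (Y_α + T_α g Y_α)`,
and adding the missing diagonal term `γ = α` to the AGS sum turns `Y_α + T_α g Y_α` into
`Σ_β δ̄_{αβ} T_β + M`.
-/

open Finset

section AntiKronecker

variable {ι R : Type*} [Fintype ι] [DecidableEq ι] [NonAssocSemiring R]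

theorem sum_antiKronecker_mul_add (a : ι) (x : ι → R) :
    (∑ γ, (if a = γ then (0 : R) else 1) * x γ) + x a = ∑ γ, x γ := by
  simp only [ite_mul, zero_mul, one_mul, sum_ite, filter_ne, sum_const_zero, zero_add]
  exact sum_erase_add _ _ (mem_univ a)

theorem mul_sum_antiKronecker_mul (a : ι) (c : R) (x : ι → R) :
    c * ∑ β, (if a = β then (0 : R) else 1) * x β =
      ∑ β, (if a = β then (0 : R) else 1) * (c * x β) := by
  simp only [mul_sum, ite_mul, mul_ite, zero_mul, one_mul, mul_zero]

end AntiKronecker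

section AGS

variable {ι R : Type*} [Fintype ι] [DecidableEq ι] [Semiring R]

theorem ags_sum_mul_eq {g h : R} (hhg : h * g = 1) {T : ι → R} {U : ι → ι → R}
    (hAGS : ∀ α β, U α β = (if α = β then (0 : R) else 1) * h +
      ∑ γ, (if α = γ then (0 : R) else 1) * (T γ * (g * U γ β)))
    (α : ι) :
    ∑ β, U α β * (g * T β) = (∑ β, (if α = β then (0 : R) else 1) * T β) +
      ∑ γ, (if α = γ then (0 : R) else 1) * (T γ * (g * ∑ β, U γ β * (g * T β))) := by
  conv_lhs => enter [2, β]; rw [hAGS α β]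
  simp only [add_mul, sum_add_distrib, sum_mul, mul_sum, mul_assoc]
  congr 1
  · simp only [← mul_assoc h, hhg, one_mul]
  · exact sum_comm

theorem mul_eq_of_bethe_salpeter {g K T : R} (hBS : T = K + K * g * T) (Y : R) :
    T * (g * Y) = K * (g * (Y + T * (g * Y))) := by
  conv_lhs => rw [hBS]
  simp only [add_mul, mul_add, mul_assoc]

end AGS

theorem ags_solves_M2_general {R : Type*} [Ring R] (g h : R)
    (hhg : h * g = 1)
    (K T : Fin 3 → R)
    (hBS : ∀ α, T α = K α + K α * g * T α)
    (U : Fin 3 → Fin 3 → R)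
    (hAGS : ∀ α β, U α β = (if α = β then (0 : R) else 1) * h +
      ∑ γ, (if α = γ then (0 : R) else 1) * (T γ * (g * U γ β)))
    (M : R)
    (hM : M = ∑ α, ∑ β, T α * (g * (U α β * (g * T β)))) :
    M = (∑ α, ∑ β, (if α = β then (0 : R) else 1) * (K α * (g * T β))) +
      ∑ α, K α * (g * M) := by
  set Y : Fin 3 → R := fun α => ∑ β, U α β * (g * T β)
  have hMY : M = ∑ α, T α * (g * Y α) := by simp only [hM, Y, mul_sum]
  have hYM : ∀ α, Y α + T α * (g * Y α) =
      (∑ β, (if α = β then (0 : R) else 1) * T β) + M := fun α => by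
    rw [hMY, ← sum_antiKronecker_mul_add α fun γ => T γ * (g * Y γ), ← add_assoc]
    exact congrArg (· + _) (ags_sum_mul_eq hhg hAGS α)
  rw [← sum_add_distrib]
  conv_lhs => rw [hMY]
  refine sum_congr rfl fun α _ => ?_
  rw [mul_eq_of_bethe_salpeter (hBS α), hYM, mul_add, mul_add, mul_sum_antiKronecker_mul,
    mul_sum_antiKronecker_mul]

/-- The element `M := Σ_{α,β} T_α·g·U_{αβ}·g·T_β`, built from the covariant
AGS amplitudes `U`, formally solves the integral equation for the connected
two-particle-irreducible `NNπ → NNπ` amplitude `M^{(2)}`. -/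
theorem ags_solves_M2 {R : Type*} [Ring R] (g h : R)
    (hgh : g * h = 1) (hhg : h * g = 1)
    (K T : Fin 3 → R)
    (hBS : ∀ α, T α = K α + K α * g * T α)
    (U : Fin 3 → Fin 3 → R)
    (hAGS : ∀ α β, U α β = (if α = β then (0 : R) else 1) * h +
      ∑ γ, (if α = γ then (0 : R) else 1) * (T γ * (g * U γ β)))
    (M : R)
    (hM : M = ∑ α, ∑ β, T α * (g * (U α β * (g * T β)))) :
    M = (∑ α, ∑ β, (if α = β then (0 : R) else 1) * (K α * (g * T β))) +
      ∑ α, K α * (g * M) :=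
  ags_solves_M2_general g h hhg K T hBS U hAGS M hM
end

section
/- Let R be a (possibly noncommutative) ring, let g be a unit of R with inverse h, and let T : Fin 3 → R. Define 3×3 matrices over R by D_{αβ} = δ̄_{αβ}·h, K_{αγ} = δ̄_{αγ}·T_γ·g, and L_{γβ} = g·T_γ·δ̄_{γβ}, where δ̄_{αβ} = 1 − δ_{αβ}. If the matrix (1 − K) is invertible and U := (1 − K)⁻¹·D, then U also satisfies U = D + U·L. (That is, the solution of the first form of the covariant AGS equations, U_{αβ} = δ̄_{αβ}h + Σ_γ δ̄_{αγ}T_γ g U_{γβ}, automatically satisfies the second, adjoint form U_{αβ} = δ̄_{αβ}h + Σ_γ U_{αγ} g T_γ δ̄_{γβ}.) -/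
/-!
Since `δ̄` takes only the central values `0` and `1` and `g h = h g = 1`, both `K D` and `D L`
have entries `∑_γ δ̄_{αγ} T_γ δ̄_{γβ}`, so `K D = D L`. For `U = (1 - K)⁻¹ D` this gives
`(1 - K) (D + U L) = D - K D + D L = D`, and cancelling the unit `1 - K` yields `U = D + U L`.
-/

theorem Ring.inverse_one_sub_mul_eq_add_mul {A : Type*} [Ring A] {k d l : A}
    (hk : IsUnit (1 - k)) (hkd : k * d = d * l) :
    Ring.inverse (1 - k) * d = d + Ring.inverse (1 - k) * d * l := by
  have hsolves : (1 - k) * (d + Ring.inverse (1 - k) * d * l) = d := by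
    rw [mul_add, ← mul_assoc, ← mul_assoc, Ring.mul_inverse_cancel _ hk, one_mul, sub_mul,
      one_mul, hkd, sub_add_cancel]
  conv_lhs => rw [← hsolves]
  exact Ring.inverse_mul_cancel_left _ _ hk

theorem Matrix.ags_K_mul_D_eq_D_mul_L {n R : Type*} [Fintype n] [DecidableEq n] [Ring R]
    {g h : R} (hgh : g * h = 1) (hhg : h * g = 1) (T : n → R) {D K L : Matrix n n R}
    (hD : ∀ α β, D α β = (if α = β then (0 : R) else 1) * h)
    (hK : ∀ α γ, K α γ = (if α = γ then (0 : R) else 1) * T γ * g)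
    (hL : ∀ γ β, L γ β = g * T γ * (if γ = β then (0 : R) else 1)) :
    K * D = D * L := by
  ext α β
  simp only [Matrix.mul_apply, hK, hD, hL]
  refine Finset.sum_congr rfl fun γ _ => ?_
  split_ifs <;> simp only [zero_mul, mul_zero, one_mul, mul_one, mul_assoc, hgh, ← mul_assoc h g,
    hhg]

/-- The solution `U = (1 - K)⁻¹ D` of the first form of the covariant AGS
equations automatically satisfies the second, adjoint form `U = D + U L`. -/
theorem ags_adjoint_form {R : Type*} [Ring R] (g h : R)
    (hgh : g * h = 1) (hhg : h * g = 1)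
    (T : Fin 3 → R)
    (D K L : Matrix (Fin 3) (Fin 3) R)
    (hD : ∀ α β, D α β = (if α = β then (0 : R) else 1) * h)
    (hK : ∀ α γ, K α γ = (if α = γ then (0 : R) else 1) * T γ * g)
    (hL : ∀ γ β, L γ β = g * T γ * (if γ = β then (0 : R) else 1))
    (hinv : IsUnit (1 - K))
    (U : Matrix (Fin 3) (Fin 3) R)
    (hU : U = Ring.inverse (1 - K) * D) :
    U = D + U * L := by
  subst hU
  exact Ring.inverse_one_sub_mul_eq_add_mul hinv (Matrix.ags_K_mul_D_eq_D_mul_L hgh hhg T hD hK hL)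
end

section
/- Let R be a (possibly noncommutative) ring and let f₁, f₂, t₁, t₂, v^X, d ∈ R satisfy: f₁ = f₂ + f₂·d·t₁ (vertex dressing), t₁ = t₂ + t₁·d·t₂ (adjoint Bethe–Salpeter equation). Set v^R := t₂ − v^X, t̃ := v^R + t₁·d·v^R, and f* := f₂ + f₂·d·t̃. Then f* = f₁ − f₁·d·v^X. (In other words, the vertex obtained by dressing the bare vertex with the crossed-term-subtracted πN t-matrix equals the full dressed vertex minus the full dressed vertex followed by one crossed interaction.) -/
/-! Dressing is associative: `f₂ d (v + t₁ d v) = (f₂ + f₂ d t₁) d v = f₁ d v`, so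
`f* = f₂ + f₁ d (t₂ - vX)`. Combining the dressing and Bethe–Salpeter equations gives the
vertex equation `f₁ = f₂ + f₁ d t₂` with the two-particle-irreducible kernel, and subtracting
`f₁ d vX` finishes. -/

section Dressing

variable {R : Type*} [NonUnitalSemiring R] {f₁ f₂ t₁ t₂ d : R}

theorem dressed_vertex_mul (hdress : f₁ = f₂ + f₂ * d * t₁) (v : R) :
    f₂ * d * (v + t₁ * d * v) = f₁ * d * v := by
  rw [hdress]
  simp only [mul_add, add_mul, mul_assoc]

theorem dressed_vertex_eq_add_mul_kernel (hdress : f₁ = f₂ + f₂ * d * t₁)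
    (hBS : t₁ = t₂ + t₁ * d * t₂) :
    f₁ = f₂ + f₁ * d * t₂ := by
  calc f₁ = f₂ + f₂ * d * (t₂ + t₁ * d * t₂) := by rw [← hBS, hdress]
    _ = f₂ + f₁ * d * t₂ := by rw [dressed_vertex_mul hdress]

end Dressing

/-- The vertex dressed with the crossed-term-subtracted πN t-matrix equals the
full dressed vertex minus the full dressed vertex followed by one crossed interaction,
i.e. the paper's Eq. (f*). -/
theorem new_vertex_eq {R : Type*} [Ring R] (f₁ f₂ t₁ t₂ vX d : R)
    (hdress : f₁ = f₂ + f₂ * d * t₁)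
    (hBS : t₁ = t₂ + t₁ * d * t₂) :
    f₂ + f₂ * d * ((t₂ - vX) + t₁ * d * (t₂ - vX)) = f₁ - f₁ * d * vX := by
  calc f₂ + f₂ * d * ((t₂ - vX) + t₁ * d * (t₂ - vX))
      = f₂ + f₁ * d * t₂ - f₁ * d * vX := by
        rw [dressed_vertex_mul hdress, mul_sub, add_sub_assoc]
    _ = f₁ - f₁ * d * vX := by rw [← dressed_vertex_eq_add_mul_kernel hdress hBS]
end

section
/- Let R be a (possibly noncommutative) ring, let g be a unit of R with inverse h, and, for each channel index α ∈ Fin 3, let K_α, T_α, v_α, t̃_α, C_α ∈ R satisfy T_α = K_α + K_α·g·T_α and t̃_α = v_α + K_α·g·t̃_α. Write δ̄_{αβ} = 1 − δ_{αβ}, and suppose U : Fin 3 → Fin 3 → R satisfies the covariant AGS equations U_{αβ} = δ̄_{αβ}·h + Σ_γ δ̄_{αγ}·T_γ·g·U_{γβ}. Then the element F := Σ_β t̃_β·C_β + Σ_{α,β} T_α·g·U_{αβ}·g·t̃_β·C_β satisfies the integral equation F = Σ_α v_α·C_α + Σ_α K_α·g·F. (This is the paper's claim that iterating Eq. (F2adj)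 with the AGS equations yields the multiple-scattering representation Eq. (bfa2) for the two-particle-irreducible NN → NNπ amplitude F^{(2)†}.) -/
/-- Iterating Eq. (F2adj) with the covariant AGS equations yields the
multiple-scattering representation Eq. (bfa2) for the two-particle-irreducible
`NN → NNπ` amplitude `F^{(2)†}`. -/
theorem multiple_scattering_F2 {R : Type*} [Ring R] (g h : R)
    (hgh : g * h = 1) (hhg : h * g = 1)
    (K T v t C : Fin 3 → R)
    (hT : ∀ α, T α = K α + K α * g * T α)
    (ht : ∀ α, t α = v α + K α * g * t α)
    (U : Fin 3 → Fin 3 → R)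
    (hAGS : ∀ α β, U α β = (if α = β then (0 : R) else 1) * h +
      ∑ γ, (if α = γ then (0 : R) else 1) * (T γ * (g * U γ β)))
    (F : R)
    (hF : F = (∑ β, t β * C β) + ∑ α, ∑ β, T α * (g * (U α β * (g * (t β * C β))))) :
    F = (∑ α, v α * C α) + ∑ α, K α * (g * F) := by
  set S : Fin 3 → R := fun β => t β * C β with hSdef
  have hS : ∀ β, S β = v β * C β + K β * (g * S β) := by
    intro β
    show t β * C β = v β * C β + K β * (g * (t β * C β))
    conv_lhs => rw [ht β]
    noncomm_ring
  have sumfill : ∀ (a : Fin 3) (Y : Fin 3 → R),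
      (∑ γ, (if a = γ then (0:R) else 1) * Y γ) + Y a = ∑ γ, Y γ := by
    intro a Y
    have h1 : ∀ γ ∈ (Finset.univ : Finset (Fin 3)), Y γ
        = (if a = γ then (0:R) else 1) * Y γ + (if a = γ then Y γ else 0) := by
      intro γ _; by_cases hh : a = γ <;> simp [hh]
    rw [Finset.sum_congr rfl h1, Finset.sum_add_distrib, Finset.sum_ite_eq]
    simp
  have key : ∀ α β, T α * (g * (U α β * (g * S β))) =
      (if α = β then (0:R) else 1) * (K α * (g * S β)) +
      ∑ γ, K α * (g * (T γ * (g * (U γ β * (g * S β))))) := by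
    intro α β
    have e1 : T α * (g * (U α β * (g * S β)))
        = K α * (g * (U α β * (g * S β)))
          + K α * (g * (T α * (g * (U α β * (g * S β))))) := by
      conv_lhs => rw [hT α]
      noncomm_ring
    have e2 : K α * (g * (U α β * (g * S β)))
        = (if α = β then (0:R) else 1) * (K α * (g * S β)) +
          ∑ γ, (if α = γ then (0:R) else 1)
            * (K α * (g * (T γ * (g * (U γ β * (g * S β)))))) := by
      conv_lhs => rw [hAGS α β]
      simp only [add_mul, Finset.sum_mul, mul_add, Finset.mul_sum]
      congr 1
      · by_cases hh : α = β <;> simp [hh]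
        rw [show g * (h * (g * S β)) = g * S β by rw [← mul_assoc, hgh, one_mul]]
      · apply Finset.sum_congr rfl; intro γ _
        by_cases hh : α = γ <;> simp [hh]
        noncomm_ring
    rw [e1, e2, add_assoc]
    congr 1
    exact sumfill α (fun γ => K α * (g * (T γ * (g * (U γ β * (g * S β))))))
  have key2 : (∑ α, ∑ β, T α * (g * (U α β * (g * S β))))
      = (∑ α, ∑ β, (if α = β then (0:R) else 1) * (K α * (g * S β)))
        + ∑ α, K α * (g * (∑ α', ∑ β, T α' * (g * (U α' β * (g * S β))))) := by
    calc ∑ α, ∑ β, T α * (g * (U α β * (g * S β)))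
        = ∑ α, ∑ β, ((if α = β then (0:R) else 1) * (K α * (g * S β))
            + ∑ γ, K α * (g * (T γ * (g * (U γ β * (g * S β)))))) :=
          Finset.sum_congr rfl fun α _ => Finset.sum_congr rfl fun β _ => key α β
      _ = (∑ α, ∑ β, (if α = β then (0:R) else 1) * (K α * (g * S β)))
            + ∑ α, ∑ β, ∑ γ, K α * (g * (T γ * (g * (U γ β * (g * S β))))) := by
          rw [← Finset.sum_add_distrib]
          exact Finset.sum_congr rfl fun α _ => by rw [Finset.sum_add_distrib]
      _ = _ := by
          congr 1
          apply Finset.sum_congr rfl; intro α _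
          simp only [Finset.mul_sum]
          exact Finset.sum_comm
  rw [hF]
  conv_lhs => rw [key2]
  generalize (∑ α, ∑ β, T α * (g * (U α β * (g * S β)))) = X
  have hsum : (∑ β, S β) = (∑ β, v β * C β) + ∑ β, K β * (g * S β) := by
    rw [← Finset.sum_add_distrib]
    exact Finset.sum_congr rfl fun β _ => hS β
  conv_lhs => rw [hsum]
  simp only [Fin.sum_univ_three, Fin.isValue]
  norm_num
  noncomm_ring
  abel
end
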